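/- arXiv:1707.08762 — 3 statements merged into one kernel-verified Lean document; each statement's English description precedes it below -/
import Mathlib

section
/- In a topological argumentation model, the grounded extension is upward closed: if f ∈ LFP_τ and f' ∈ τ with f ⊆ f', then f' ∈ LFP_τ. -/
variable {X : Type*} [TopologicalSpace X]

/-- The set of opens defended by the family `T` of opens
(`atk t t'` reads "t' attacks t"). -/
def defends (atk : Set X → Set X → Prop) (T : Set (Set X)) : Set (Set X) :=
  {t | IsOpen t ∧ ∀ t', IsOpen t' → atk t t' → ∃ t'' ∈ T, atk t' t''}

/-- The grounded extension `LFP_τ`: the least fixed point of the defense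
function, constructed as the intersection of all prefixed points. -/
def groundedExt (atk : Set X → Set X → Prop) : Set (Set X) :=
  ⋂₀ {T : Set (Set X) | defends atk T ⊆ T}

/-- Grounded belief: some member of the grounded extension supports `P`. -/
def GroundedBelief (atk : Set X → Set X → Prop) (P : Set X) : Prop :=
  ∃ f ∈ groundedExt atk, f ⊆ P

lemma defends_mono (atk : Set X → Set X → Prop) {T T' : Set (Set X)} (h : T ⊆ T') :
    defends atk T ⊆ defends atk T' := by
  rintro t ⟨ht, hdef⟩
  refine ⟨ht, fun t' ht' hatk => ?_⟩
  obtain ⟨t'', ht'', hatk'⟩ := hdef t' ht' hatk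
  exact ⟨t'', h ht'', hatk'⟩

lemma defends_groundedExt_subset (atk : Set X → Set X → Prop) :
    defends atk (groundedExt atk) ⊆ groundedExt atk :=
  fun _ ht _ hT => hT (defends_mono atk (Set.sInter_subset_of_mem hT) ht)

lemma groundedExt_subset_defends (atk : Set X → Set X → Prop) :
    groundedExt atk ⊆ defends atk (groundedExt atk) :=
  fun _ ht => ht _ (defends_mono atk (defends_groundedExt_subset atk))

/-- An attacker `t'` of `f'` is disjoint from `f'`, hence from `f`; so either `t'` attacks `f`,
and is answered because `T` defends `f`, or `f` attacks `t'` and answers it itself. -/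
lemma mem_defends_of_subset (atk : Set X → Set X → Prop)
    (h1 : ∀ t₁ t₂ : Set X, IsOpen t₁ → IsOpen t₂ → (t₁ ∩ t₂ = ∅ ↔ atk t₁ t₂ ∨ atk t₂ t₁))
    {T : Set (Set X)} {f f' : Set X} (hfT : f ∈ T) (hf : f ∈ defends atk T)
    (hf' : IsOpen f') (hsub : f ⊆ f') : f' ∈ defends atk T := by
  obtain ⟨hfo, hdef⟩ := hf
  refine ⟨hf', fun t' ht' hatk => ?_⟩
  have hdisj : f ∩ t' = ∅ := Set.subset_empty_iff.mp <|
    ((h1 f' t' hf' ht').2 (Or.inl hatk)) ▸ Set.inter_subset_inter_left t' hsub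
  rcases (h1 f t' hfo ht').1 hdisj with ht'f | hft'
  · exact hdef t' ht' ht'f
  · exact ⟨f, hfT, hft'⟩

theorem groundedExt_upward_closed_general (atk : Set X → Set X → Prop)
    (h1 : ∀ t₁ t₂ : Set X, IsOpen t₁ → IsOpen t₂ → (t₁ ∩ t₂ = ∅ ↔ atk t₁ t₂ ∨ atk t₂ t₁)) :
    ∀ f f' : Set X, f ∈ groundedExt atk → IsOpen f' → f ⊆ f' →
      f' ∈ groundedExt atk :=
  fun _ _ hf hf' hsub => defends_groundedExt_subset atk <|
    mem_defends_of_subset atk h1 hf (groundedExt_subset_defends atk hf) hf' hsub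

/-- The grounded extension is upward closed among opens. -/
theorem groundedExt_upward_closed (atk : Set X → Set X → Prop)
    (h1 : ∀ t₁ t₂ : Set X, IsOpen t₁ → IsOpen t₂ → (t₁ ∩ t₂ = ∅ ↔ atk t₁ t₂ ∨ atk t₂ t₁))
    (h2 : ∀ t t₁ t₁' : Set X, IsOpen t → IsOpen t₁ → IsOpen t₁' → atk t₁ t → t₁' ⊆ t₁ → atk t₁' t)
    (h3 : ∀ t : Set X, IsOpen t → t ≠ ∅ → atk ∅ t ∧ ¬ atk t ∅) :
    ∀ f f' : Set X, f ∈ groundedExt atk → IsOpen f' → f ⊆ f' →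
      f' ∈ groundedExt atk :=
  groundedExt_upward_closed_general atk h1
end

section
/- Lemma characterizing closure of the grounded extension under intersection: for f₁, f₂ ∈ LFP_τ, one has f₁ ∩ f₂ ∈ LFP_τ if and only if for every t ∈ τ with f₁ ∩ f₂ ⤙ t, there is f ∈ LFP_τ with t ∩ f = ∅. -/
variable {X : Type*} [TopologicalSpace X]

section GroundedExtension

variable (atk : Set X → Set X → Prop)

theorem defends_mono_s7 : Monotone (defends atk) :=
  fun _ _ hT _ ⟨ht, hdef⟩ =>
    ⟨ht, fun t' ht' hatk => (hdef t' ht' hatk).imp fun _ ⟨hmem, hc⟩ => ⟨hT hmem, hc⟩⟩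

def defendsHom : Set (Set X) →o Set (Set X) := ⟨defends atk, defends_mono_s7 atk⟩

/-- `groundedExt atk` is by definition `(defendsHom atk).lfp`. -/
theorem defends_groundedExt : defends atk (groundedExt atk) = groundedExt atk :=
  (defendsHom atk).map_lfp

theorem mem_groundedExt_iff {t : Set X} :
    t ∈ groundedExt atk ↔
      IsOpen t ∧ ∀ t', IsOpen t' → atk t t' → ∃ f ∈ groundedExt atk, atk t' f :=
  (Set.ext_iff.1 (defends_groundedExt atk) t).symm

theorem IsOpen.of_mem_groundedExt {t : Set X} (ht : t ∈ groundedExt atk) : IsOpen t :=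
  ((mem_groundedExt_iff atk).1 ht).1

variable {atk}

/-- Either `f` attacks `t`, or `t` attacks `f`, and then `f` is defended against `t`. -/
theorem exists_mem_groundedExt_attacks_of_disjoint
    (hdisj : ∀ t₁ t₂ : Set X, IsOpen t₁ → IsOpen t₂ → t₁ ∩ t₂ = ∅ → atk t₁ t₂ ∨ atk t₂ t₁)
    {t f : Set X} (ht : IsOpen t) (hf : f ∈ groundedExt atk) (htf : t ∩ f = ∅) :
    ∃ f' ∈ groundedExt atk, atk t f' := by
  obtain ⟨hfo, hf_def⟩ := (mem_groundedExt_iff atk).1 hf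
  rcases hdisj t f ht hfo htf with hattacked | hattacks
  · exact ⟨f, hf, hattacked⟩
  · exact hf_def t ht hattacks

end GroundedExtension

theorem inter_mem_groundedExt_iff_general (atk : Set X → Set X → Prop)
    (h1 : ∀ t₁ t₂ : Set X, IsOpen t₁ → IsOpen t₂ → (t₁ ∩ t₂ = ∅ ↔ atk t₁ t₂ ∨ atk t₂ t₁)) :
    ∀ f₁ f₂ : Set X, f₁ ∈ groundedExt atk → f₂ ∈ groundedExt atk →
      (f₁ ∩ f₂ ∈ groundedExt atk ↔
        ∀ t : Set X, IsOpen t → atk (f₁ ∩ f₂) t →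
          ∃ f ∈ groundedExt atk, t ∩ f = ∅) := by
  intro f₁ f₂ hf₁ hf₂
  rw [mem_groundedExt_iff]
  constructor
  · rintro ⟨-, hdef⟩ t ht hatk
    obtain ⟨f, hf, hcounter⟩ := hdef t ht hatk
    exact ⟨f, hf, (h1 t f ht (.of_mem_groundedExt atk hf)).2 (.inl hcounter)⟩
  · intro hdisj
    refine ⟨(IsOpen.of_mem_groundedExt atk hf₁).inter (.of_mem_groundedExt atk hf₂),
      fun t ht hatk => ?_⟩
    obtain ⟨f, hf, htf⟩ := hdisj t ht hatk
    exact exists_mem_groundedExt_attacks_of_disjoint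
      (fun t₁ t₂ h₁ h₂ => (h1 t₁ t₂ h₁ h₂).1) ht hf htf

/-- Characterization of when the intersection of two members of the grounded
extension is again in the grounded extension. -/
theorem inter_mem_groundedExt_iff (atk : Set X → Set X → Prop)
    (h1 : ∀ t₁ t₂ : Set X, IsOpen t₁ → IsOpen t₂ → (t₁ ∩ t₂ = ∅ ↔ atk t₁ t₂ ∨ atk t₂ t₁))
    (h2 : ∀ t t₁ t₁' : Set X, IsOpen t → IsOpen t₁ → IsOpen t₁' → atk t₁ t → t₁' ⊆ t₁ → atk t₁' t)
    (h3 : ∀ t : Set X, IsOpen t → t ≠ ∅ → atk ∅ t ∧ ¬ atk t ∅) :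
    ∀ f₁ f₂ : Set X, f₁ ∈ groundedExt atk → f₂ ∈ groundedExt atk →
      (f₁ ∩ f₂ ∈ groundedExt atk ↔
        ∀ t : Set X, IsOpen t → atk (f₁ ∩ f₂) t →
          ∃ f ∈ groundedExt atk, t ∩ f = ∅) :=
  inter_mem_groundedExt_iff_general atk h1
end

section
/- For the topological argumentation model constructed from a belief neighborhood model (X, N) (with τ = 2^X and t ⤙ t' iff t' ≠ ∅, t ∩ t' = ∅, t ∉ N, plus ∅ attacked by everything), the grounded extension equals N: LFP_τ = N. -/
variable {X : Type*} [TopologicalSpace X]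

/-- The attack relation induced by a belief neighborhood `N` on `τ = 2^X`. -/
def nbAttack {Y : Type*} (N : Set (Set Y)) (t t' : Set Y) : Prop :=
  (t' ≠ ∅ ∧ t ∩ t' = ∅ ∧ t ∉ N) ∨ (t' = ∅ ∧ t = ∅)

/-! Members of `N` are unattacked (as `∅ ∉ N`), so they lie in the grounded extension.
Conversely `N` is a prefixed point of the defense function: an argument `t ∉ N` is attacked
by `tᶜ`, and a counterattack on `tᶜ` by some `b ∈ N` means `b ⊆ t`, so `t ∈ N` after all. -/

section Grounded

variable {atk : Set X → Set X → Prop}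

theorem groundedExt_subset_of_defends_subset {T : Set (Set X)} (hT : defends atk T ⊆ T) :
    groundedExt atk ⊆ T :=
  Set.sInter_subset_of_mem hT

theorem mem_groundedExt_of_forall_not_atk {t : Set X} (ht : IsOpen t)
    (hunatk : ∀ t', IsOpen t' → ¬ atk t t') : t ∈ groundedExt atk :=
  Set.mem_sInter.2 fun _ hT => hT ⟨ht, fun t' ht' hatk => (hunatk t' ht' hatk).elim⟩

end Grounded

section Neighborhood

variable {Y : Type*} {N : Set (Set Y)}

theorem not_nbAttack_of_mem (hempty : ∅ ∉ N) {b t' : Set Y} (hb : b ∈ N) : ¬ nbAttack N b t' := by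
  rintro (⟨-, -, hbN⟩ | ⟨-, rfl⟩)
  exacts [hbN hb, hempty hb]

theorem nbAttack_compl (huniv : Set.univ ∈ N) {t : Set Y} (ht : t ∉ N) : nbAttack N t tᶜ := by
  refine Or.inl ⟨fun h => ht ?_, Set.inter_compl_self t, ht⟩
  rwa [← compl_compl t, h, Set.compl_empty]

theorem subset_of_nbAttack_compl {t b : Set Y} (h : nbAttack N tᶜ b) : b ⊆ t := by
  rcases h with ⟨-, hdisj, -⟩ | ⟨rfl, -⟩
  · exact Set.disjoint_compl_left_iff_subset.1 (Set.disjoint_iff_inter_eq_empty.2 hdisj)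
  · exact Set.empty_subset t

end Neighborhood

theorem defends_nbAttack_subset {N : Set (Set X)} [DiscreteTopology X] (huniv : Set.univ ∈ N)
    (hN : IsUpperSet N) : defends (nbAttack N) N ⊆ N := by
  rintro t ⟨-, hdef⟩
  by_contra ht
  obtain ⟨b, hb, hatk⟩ := hdef tᶜ (isOpen_discrete _) (nbAttack_compl huniv ht)
  exact ht (hN (subset_of_nbAttack_compl hatk) hb)

/-- In the topological argumentation model built from a belief neighborhood
model (discrete topology, induced attack relation), the grounded extension
equals the neighborhood family. -/
theorem groundedExt_eq_neighborhood {Y : Type*} (N : Set (Set Y))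
    (hX : Set.univ ∈ N)
    (hsup : ∀ b b' : Set Y, b ∈ N → b ⊆ b' → b' ∈ N)
    (hcomp : ∀ b : Set Y, b ∈ N → bᶜ ∉ N) :
    letI : TopologicalSpace Y := ⊥
    groundedExt (nbAttack N) = N := by
  let : TopologicalSpace Y := ⊥
  have : DiscreteTopology Y := ⟨rfl⟩
  have hN : IsUpperSet N := fun b b' hbb' hb => hsup b b' hb hbb'
  have hempty : ∅ ∉ N := by simpa using hcomp Set.univ hX
  refine subset_antisymm (groundedExt_subset_of_defends_subset (defends_nbAttack_subset hX hN)) ?_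
  exact fun b hb => mem_groundedExt_of_forall_not_atk (isOpen_discrete b)
    fun _ _ => not_nbAttack_of_mem hempty hb
end
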